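/- arXiv:2503.06143 — 2 statements merged into one kernel-verified Lean document; each statement's English description precedes it below -/
import Mathlib

section
/- For every finite multiset {n₁,...,n_k} of positive integers with n₁+⋯+n_k = 9 and k ≥ 2, one has f(n₁)+⋯+f(n_k) ≠ 17, where f(m) = (m²−m+2)/2. -/
def lyap (m : ℕ) : ℕ := (m^2 - m + 2) / 2

theorem no_lorentz_sum_matches_complex_psd3 (s : Multiset ℕ)
    (hpos : ∀ x ∈ s, 1 ≤ x) (hsum : s.sum = 9) (hcard : 2 ≤ Multiset.card s) :
    (s.map lyap).sum ≠ 17 := by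
  intro h17
  have h8 : ∀ x ∈ s, x ≤ 8 := by
    intro x hx
    obtain ⟨t, rfl⟩ := Multiset.exists_cons_of_mem hx
    have hct : 1 ≤ Multiset.card t := by simpa using hcard
    obtain ⟨y, hy⟩ := Multiset.card_pos_iff_exists_mem.mp hct
    have hy1 : 1 ≤ y := hpos y (by simp [hy])
    have hts : y ≤ t.sum := Multiset.le_sum_of_mem hy
    have : x + t.sum = 9 := by simpa using hsum
    omega
  have hsub : s.toFinset ⊆ Finset.Icc 1 8 := by
    intro x hx
    simp only [Multiset.mem_toFinset] at hx
    exact Finset.mem_Icc.mpr ⟨hpos x hx, h8 x hx⟩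
  have key : ∀ f : ℕ → ℕ, (s.map f).sum = ∑ i ∈ Finset.Icc 1 8, s.count i * f i := by
    intro f
    rw [Finset.sum_multiset_map_count]
    rw [Finset.sum_subset hsub]
    · simp [smul_eq_mul]
    · intro x _ hx
      simp only [Multiset.mem_toFinset] at hx
      simp [Multiset.count_eq_zero_of_notMem hx]
  have e1 := key id
  have e2 := key lyap
  rw [Multiset.map_id] at e1
  rw [hsum] at e1
  rw [h17] at e2
  have hIcc : (Finset.Icc 1 8 : Finset ℕ) = {1,2,3,4,5,6,7,8} := rfl
  rw [hIcc] at e1 e2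
  norm_num [Finset.sum_insert, lyap] at e1 e2
  set c1 := s.count 1 with hc1
  set c2 := s.count 2 with hc2
  set c3 := s.count 3 with hc3
  set c4 := s.count 4 with hc4
  set c5 := s.count 5 with hc5
  set c6 := s.count 6 with hc6
  set c7 := s.count 7 with hc7
  set c8 := s.count 8 with hc8
  have h4 : c4 ≤ 2 := by omega
  have h5 : c5 ≤ 1 := by omega
  have h6 : c6 = 0 := by omega
  have h7 : c7 = 0 := by omega
  have h8' : c8 = 0 := by omega
  interval_cases c4 <;> interval_cases c5 <;> omega
end

section
/- For every finite multiset {n₁,...,n_k} of positive integers, if n₁+⋯+n_k = 10 and f(n₁)+⋯+f(n_k) = 2·f(5) = 22 with f(m) = (m²−m+2)/2, then the multiset {n₁,...,n_k} equals {5,5} (up to replacing any part 2 with two parts 1). -/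
lemma lorentz_counts_aux (c1 c2 c3 c4 c5 c6 c7 c8 c9 c10 : ℕ)
    (h1 : c1 + c2*2 + c3*3 + c4*4 + c5*5 + c6*6 + c7*7 + c8*8 + c9*9 + c10*10 = 10)
    (h2 : c1 + c2*2 + c3*4 + c4*7 + c5*11 + c6*16 + c7*22 + c8*29 + c9*37 + c10*46 = 22) :
    c1 = 0 ∧ c2 = 0 ∧ c3 = 0 ∧ c4 = 0 ∧ c5 = 2 ∧ c6 = 0 ∧ c7 = 0 ∧ c8 = 0 ∧
      c9 = 0 ∧ c10 = 0 := by
  have b3 : c3 ≤ 3 := by omega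
  have b4 : c4 ≤ 2 := by omega
  have b5 : c5 ≤ 2 := by omega
  have b6 : c6 ≤ 1 := by omega
  have b7 : c7 ≤ 1 := by omega
  have b8 : c8 ≤ 1 := by omega
  have b9 : c9 ≤ 1 := by omega
  have b10 : c10 ≤ 1 := by omega
  interval_cases c3 <;> interval_cases c4 <;> interval_cases c5 <;>
    interval_cases c6 <;> interval_cases c7 <;> interval_cases c8 <;>
    interval_cases c9 <;> interval_cases c10 <;> omega

theorem L5L5_no_lorentz_simulacrum (s : Multiset ℕ)
    (hpos : ∀ x ∈ s, 1 ≤ x) (hsum : s.sum = 10)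
    (hrank : (s.map lyap).sum = 22) :
    s.bind (fun x => if x = 2 then {1, 1} else {x}) = {5, 5} := by
  have hle : ∀ x ∈ s, x ≤ 10 := by
    intro x hx
    have := Multiset.le_sum_of_mem hx
    omega
  have hsub : s.toFinset ⊆ Finset.range 11 := by
    intro a ha
    simp only [Multiset.mem_toFinset] at ha
    exact Finset.mem_range.mpr (by have := hle a ha; omega)
  have key : ∀ f : ℕ → ℕ, (s.map f).sum = ∑ a ∈ Finset.range 11, s.count a * f a := by
    intro f
    rw [Finset.sum_multiset_map_count]
    refine Finset.sum_subset hsub (fun x _ hx => ?_)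
    rw [Multiset.count_eq_zero_of_notMem (by simpa using hx)]
    simp
  have h0 : s.count 0 = 0 := by
    rw [Multiset.count_eq_zero]
    intro h
    exact absurd (hpos 0 h) (by norm_num)
  have h1 : ∑ a ∈ Finset.range 11, s.count a * a = 10 := by
    have := key id
    simpa [hsum] using this.symm
  have h2 : ∑ a ∈ Finset.range 11, s.count a * lyap a = 22 := by
    rw [← key lyap, hrank]
  simp only [Finset.sum_range_succ, Finset.sum_range_zero, lyap] at h1 h2
  norm_num [h0] at h1 h2
  obtain ⟨e1, e2, e3, e4, e5, e6, e7, e8, e9, e10⟩ :=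
    lorentz_counts_aux _ _ _ _ _ _ _ _ _ _ h1 h2
  have hs : s = {5, 5} := by
    ext a
    by_cases ha : a ∈ s
    · have h1a := hpos a ha
      have h2a := hle a ha
      interval_cases a <;>
        simp_all [Multiset.insert_eq_cons]
    · have ha5 : a ≠ 5 := by
        intro h; subst h
        rw [← Multiset.count_pos, e5] at ha; omega
      rw [Multiset.count_eq_zero_of_notMem ha]
      simp [Multiset.insert_eq_cons, Multiset.count_cons, Multiset.count_singleton, ha5]
  subst hs
  decide
end
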